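/- Let H be Hermitian on ℋ, let x and p be the position and momentum operators of a work storage system satisfying [x,p]=i, and for a unitary U on ℋ define V = ∫dq e^{iqH} U e^{-iqH} ⊗ |q⟩_p⟨q|_p, where |q⟩_p are momentum eigenstates. Then V is unitary, commutes with H⊗I + I⊗x (total energy conservation), and commutes with I⊗p (translation invariance). -/

import Mathlib

/-!
`V` acts fibrewise over the momentum variable by the unitaries `e^{iqH} U e^{-iqH}`, so it
commutes with multiplication by `q`. Since `θ ↦ e^{iθH}` is a one-parameter group, the energy
shift by `θ` conjugates the fibre at `q - θ` into the fibre at `q`, which is what `V` has there.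
-/

open Matrix

/-- `e^{iθH}` for a real parameter `θ` and a matrix `H`. -/
noncomputable def expI {n : Type*} [Fintype n] [DecidableEq n]
    (H : Matrix n n ℂ) (θ : ℝ) : Matrix n n ℂ :=
  NormedSpace.exp (((θ : ℂ) * Complex.I) • H)

/-- The Kitaev construction `V = ∫dq e^{iqH} U e^{-iqH} ⊗ |q⟩_p⟨q|_p`, realized in the
momentum representation of the work storage: a wavefunction is `ψ : ℝ → (n → ℂ)` and
`(Vψ)(q) = e^{iqH} U e^{-iqH} ψ(q)`. -/
noncomputable def kitaevV {n : Type*} [Fintype n] [DecidableEq n]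
    (H U : Matrix n n ℂ) (ψ : ℝ → (n → ℂ)) : ℝ → (n → ℂ) :=
  fun q => (expI H q * U * expI H (-q)).mulVec (ψ q)

/-- The unitary `e^{iθ(H⊗I + I⊗x)}` in the momentum representation: since
`e^{iθx}|q⟩_p = |q+θ⟩_p`, it acts as `(E_θψ)(q) = e^{iθH} ψ(q-θ)`. -/
noncomputable def energyShift {n : Type*} [Fintype n] [DecidableEq n]
    (H : Matrix n n ℂ) (θ : ℝ) (ψ : ℝ → (n → ℂ)) : ℝ → (n → ℂ) :=
  fun q => (expI H θ).mulVec (ψ (q - θ))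

section expI

variable {n : Type*} [Fintype n] [DecidableEq n]

lemma expI_add (H : Matrix n n ℂ) (a b : ℝ) : expI H (a + b) = expI H a * expI H b := by
  unfold expI
  rw [← Matrix.exp_add_of_commute _ _ (((Commute.refl H).smul_left _).smul_right _), ← add_smul]
  push_cast
  rw [add_mul]

lemma expI_zero (H : Matrix n n ℂ) : expI H 0 = 1 := by
  simp [expI]

lemma expI_mul_expI_neg (H : Matrix n n ℂ) (θ : ℝ) : expI H θ * expI H (-θ) = 1 := by
  rw [← expI_add, add_neg_cancel, expI_zero]

lemma expI_neg_mul_expI (H : Matrix n n ℂ) (θ : ℝ) : expI H (-θ) * expI H θ = 1 := by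
  rw [← expI_add, neg_add_cancel, expI_zero]

lemma conjTranspose_expI {H : Matrix n n ℂ} (hH : H.IsHermitian) (θ : ℝ) :
    (expI H θ)ᴴ = expI H (-θ) := by
  unfold expI
  rw [← Matrix.exp_conjTranspose, conjTranspose_smul, hH.eq]
  congr 2
  simp

lemma expI_mem_unitaryGroup {H : Matrix n n ℂ} (hH : H.IsHermitian) (θ : ℝ) :
    expI H θ ∈ unitaryGroup n ℂ := by
  refine ⟨?_, ?_⟩ <;>
    simp only [star_eq_conjTranspose, conjTranspose_expI hH, expI_mul_expI_neg, expI_neg_mul_expI]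

lemma expI_conj_fibre (H U : Matrix n n ℂ) (θ q : ℝ) :
    expI H θ * (expI H q * U * expI H (-q)) * expI H (-θ) =
      expI H (θ + q) * U * expI H (-(θ + q)) := by
  rw [expI_add, neg_add, add_comm (-θ), expI_add]
  simp only [mul_assoc]

end expI

section kitaevV

variable {n : Type*} [Fintype n] [DecidableEq n]

lemma kitaevV_smul_momentum (H U : Matrix n n ℂ) (ψ : ℝ → n → ℂ) :
    kitaevV H U (fun q : ℝ => (q : ℂ) • ψ q) = fun q : ℝ => (q : ℂ) • kitaevV H U ψ q := by
  funext q
  exact mulVec_smul _ _ _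

lemma energyShift_kitaevV_energyShift_neg (H U : Matrix n n ℂ) (θ : ℝ) (ψ : ℝ → n → ℂ) :
    energyShift H θ (kitaevV H U (energyShift H (-θ) ψ)) = kitaevV H U ψ := by
  funext q
  simp only [energyShift, kitaevV, mulVec_mulVec, sub_neg_eq_add, sub_add_cancel]
  rw [← mul_assoc, expI_conj_fibre, add_sub_cancel]

end kitaevV

theorem kitaevV_unitary_energyConserving_translationInvariant
    {n : Type*} [Fintype n] [DecidableEq n]
    (H U : Matrix n n ℂ) (hH : H.IsHermitian) (hU : U ∈ Matrix.unitaryGroup n ℂ) :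
    (∀ q : ℝ, expI H q * U * expI H (-q) ∈ Matrix.unitaryGroup n ℂ) ∧
    (∀ ψ : ℝ → (n → ℂ),
      kitaevV H U (fun q => (Complex.ofReal q) • ψ q) = fun q => (Complex.ofReal q) • kitaevV H U ψ q) ∧
    (∀ θ : ℝ, ∀ ψ : ℝ → (n → ℂ),
      energyShift H θ (kitaevV H U (energyShift H (-θ) ψ)) = kitaevV H U ψ) :=
  ⟨fun q => mul_mem (mul_mem (expI_mem_unitaryGroup hH q) hU) (expI_mem_unitaryGroup hH (-q)),
    kitaevV_smul_momentum H U, energyShift_kitaevV_energyShift_neg H U⟩
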